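/- arXiv:1908.09952 — 2 statements merged into one kernel-verified Lean document; each statement's English description precedes it below -/
import Mathlib

section
/- Let β(s) = (x(s), 0, z(s)) be an arc-length parametrized profile curve with x > 0 generating a surface of revolution Σ. Suppose: (a) −1 ≤ x''(s)(x(s) − (x'(s)/z'(s))z(s)) whenever z'(s) ≠ 0; (b) −1 ≤ z(s)z''(s) whenever z'(s) = 0; and (c) −x(s)x'(s)² ≤ z'(s)x'(s)z(s) for all s. Then both eigenvalues λ₁ = 1 + k₁⟨p,N⟩ and λ₂ = 1 + k₂⟨p,N⟩ of Hess_Σ(|p|²/2) are nonnegative, and hence Σ satisfies |Φ|²⟨p,N⟩² ≤ ½(2 + H⟨p,N⟩)² along the profile curve. -/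
/-!
Write `q = x'z − xz'` for the support function. For `λ₂`, clearing the denominator `x > 0` and
using `x'² + z'² = 1` gives `x·λ₂ = x x'² + z' x' z`, which is (c). For `λ₁`, differentiating
`x'² + z'² = 1` gives `x'x'' + z'z'' = 0`; where `z' ≠ 0` this turns `k₁ q` into
`x''(x − (x'/z')z)`, which is (a), and where `z' = 0` it forces `x'² = 1`, `x'' = 0` and
`k₁ q = z z''`, which is (b). The pinching inequality is then `4λ₁λ₂ ≥ 0`.
-/

lemma mul_add_mul_eq_zero_of_sq_add_sq_eq {f g : ℝ → ℝ} {f' g' c s : ℝ}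
    (hf : HasDerivAt f f' s) (hg : HasDerivAt g g' s) (h : ∀ t, f t ^ 2 + g t ^ 2 = c) :
    f s * f' + g s * g' = 0 := by
  have hderiv : HasDerivAt (fun t => f t ^ 2 + g t ^ 2) (2 * f s * f' + 2 * g s * g') s := by
    simpa [mul_comm, mul_left_comm] using (hf.fun_pow 2).fun_add (hg.fun_pow 2)
  have hconst : HasDerivAt (fun t => f t ^ 2 + g t ^ 2) 0 s := by
    simpa only [h] using hasDerivAt_const s c
  linarith [hderiv.unique hconst]

lemma sq_sub_mul_sq_le_of_one_add_mul_nonneg {a b q : ℝ} (ha : 0 ≤ 1 + a * q)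
    (hb : 0 ≤ 1 + b * q) : (a - b) ^ 2 / 2 * q ^ 2 ≤ 1 / 2 * (2 + (a + b) * q) ^ 2 := by
  have key : 1 / 2 * (2 + (a + b) * q) ^ 2 - (a - b) ^ 2 / 2 * q ^ 2
      = 2 * ((1 + a * q) * (1 + b * q)) := by ring
  nlinarith [mul_nonneg ha hb]

section Profile

variable {x z x' z' x'' z'' : ℝ}

lemma one_add_div_mul_support_nonneg (hx : 0 < x) (harc : x' ^ 2 + z' ^ 2 = 1)
    (hc : -(x * x' ^ 2) ≤ z' * x' * z) : 0 ≤ 1 + z' / x * (x' * z - x * z') := by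
  have hnum : 1 + z' / x * (x' * z - x * z') = (x * x' ^ 2 + z' * x' * z) / x := by
    field_simp
    linear_combination (-x) * harc
  rw [hnum]
  exact div_nonneg (by linarith) hx.le

lemma curvature_mul_support_eq_of_ne_zero (hz' : z' ≠ 0) (harc : x' ^ 2 + z' ^ 2 = 1)
    (hrel : x' * x'' + z' * z'' = 0) :
    (x' * z'' - x'' * z') * (x' * z - x * z') = x'' * (x - x' / z' * z) := by
  have hz'' : z'' = -(x' * x'') / z' := by
    field_simp
    linarith
  rw [hz'']
  field_simp
  linear_combination x'' * (x * z' - x' * z) * harc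

lemma curvature_mul_support_eq_of_eq_zero (hz' : z' = 0) (harc : x' ^ 2 + z' ^ 2 = 1)
    (hrel : x' * x'' + z' * z'' = 0) :
    (x' * z'' - x'' * z') * (x' * z - x * z') = z * z'' := by
  subst hz'
  have hx'sq : x' ^ 2 = 1 := by linarith
  linear_combination z * z'' * hx'sq

end Profile

theorem stmt6_general (x z x' z' x'' z'' : ℝ → ℝ)
    (hx' : ∀ s, HasDerivAt x' (x'' s) s)
    (hz' : ∀ s, HasDerivAt z' (z'' s) s)
    (harc : ∀ s, x' s ^ 2 + z' s ^ 2 = 1) (hxpos : ∀ s, 0 < x s)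
    (ha : ∀ s, z' s ≠ 0 → -1 ≤ x'' s * (x s - (x' s / z' s) * z s))
    (hb : ∀ s, z' s = 0 → -1 ≤ z s * z'' s)
    (hc : ∀ s, -(x s * x' s ^ 2) ≤ z' s * x' s * z s) :
    ∀ s : ℝ,
      0 ≤ 1 + (x' s * z'' s - x'' s * z' s) * (x' s * z s - x s * z' s) ∧
      0 ≤ 1 + (z' s / x s) * (x' s * z s - x s * z' s) ∧
      ((x' s * z'' s - x'' s * z' s) - z' s / x s) ^ 2 / 2 *
          (x' s * z s - x s * z' s) ^ 2 ≤
        (1 / 2) * (2 + ((x' s * z'' s - x'' s * z' s) + z' s / x s) *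
          (x' s * z s - x s * z' s)) ^ 2 := by
  intro s
  have hrel := mul_add_mul_eq_zero_of_sq_add_sq_eq (hx' s) (hz' s) harc
  have hlam₁ : 0 ≤ 1 + (x' s * z'' s - x'' s * z' s) * (x' s * z s - x s * z' s) := by
    by_cases hz0 : z' s = 0
    · rw [curvature_mul_support_eq_of_eq_zero hz0 (harc s) hrel]
      linarith [hb s hz0]
    · rw [curvature_mul_support_eq_of_ne_zero hz0 (harc s) hrel]
      linarith [ha s hz0]
  have hlam₂ := one_add_div_mul_support_nonneg (hxpos s) (harc s) (hc s)
  exact ⟨hlam₁, hlam₂, sq_sub_mul_sq_le_of_one_add_mul_nonneg hlam₁ hlam₂⟩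

/-- Sufficient conditions for the pinching inequality on a surface of revolution: if the
arc-length profile curve `(x, z)` with `x > 0` satisfies
(a) `−1 ≤ x''(x − (x'/z')z)` wherever `z' ≠ 0`, (b) `−1 ≤ z z''` wherever `z' = 0`, and
(c) `−x x'² ≤ z' x' z` everywhere, then both Hessian eigenvalues
`λ₁ = 1 + k₁⟨p,N⟩`, `λ₂ = 1 + k₂⟨p,N⟩` are nonnegative, hence
`|Φ|²⟨p,N⟩² ≤ ½(2 + H⟨p,N⟩)²` along the profile, where `k₁ = x'z'' − x''z'`,
`k₂ = z'/x`, `⟨p,N⟩ = x'z − xz'`, `H = k₁ + k₂` and `|Φ|² = (k₁ − k₂)²/2`. -/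
theorem stmt6 (x z x' z' x'' z'' : ℝ → ℝ)
    (hx : ∀ s, HasDerivAt x (x' s) s) (hx' : ∀ s, HasDerivAt x' (x'' s) s)
    (hz : ∀ s, HasDerivAt z (z' s) s) (hz' : ∀ s, HasDerivAt z' (z'' s) s)
    (harc : ∀ s, x' s ^ 2 + z' s ^ 2 = 1) (hxpos : ∀ s, 0 < x s)
    (ha : ∀ s, z' s ≠ 0 → -1 ≤ x'' s * (x s - (x' s / z' s) * z s))
    (hb : ∀ s, z' s = 0 → -1 ≤ z s * z'' s)
    (hc : ∀ s, -(x s * x' s ^ 2) ≤ z' s * x' s * z s) :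
    ∀ s : ℝ,
      0 ≤ 1 + (x' s * z'' s - x'' s * z' s) * (x' s * z s - x s * z' s) ∧
      0 ≤ 1 + (z' s / x s) * (x' s * z s - x s * z' s) ∧
      ((x' s * z'' s - x'' s * z' s) - z' s / x s) ^ 2 / 2 *
          (x' s * z s - x s * z' s) ^ 2 ≤
        (1 / 2) * (2 + ((x' s * z'' s - x'' s * z' s) + z' s / x s) *
          (x' s * z s - x s * z' s)) ^ 2 :=
  stmt6_general x z x' z' x'' z'' hx' hz' harc hxpos ha hb hc
end

section
/- Fix 0 < B < 1 and H > 0, and set z₀ = (1−B²)/(HB). If the unduloid profile functions satisfy z(s₀) < z₀, where s₀ = (1/H)sin⁻¹(−B) + 3π/(2H), then g(s) = x(s) − (x'(s)/z'(s))z(s) > 0 for all s ∈ (0, s₀). -/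
/-!
Writing `c = cos (H s)`, one has `x' = B sin (H s) / √(1 + B² - 2Bc)` and
`z' = (1 - Bc) / √(1 + B² - 2Bc)`, so `g = x - (B sin (H s) / (1 - Bc)) z` and
`g' = B H (B - c) z / (1 - Bc)²`. Since `z` is increasing with `z 0 = 0`, `g` decreases while
`H s < arccos B` and increases from there up to `H s₀ = π + arccos B`. At `s₁ = arccos B / H`
we have `x = √(1 - B²) / H` and `x'/z' = B / √(1 - B²)`, so `g s₁ > 0` amounts to
`z s₁ < (1 - B²) / (H B)`, which follows from `z s₁ < z s₀`.
-/

open Real Set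

/-- The unduloid profile: radial coordinate. -/
noncomputable def ux (H B : ℝ) (s : ℝ) : ℝ :=
  (1 / H) * Real.sqrt (1 + B ^ 2 + 2 * B * Real.sin (H * s + 3 * π / 2))

/-- The unduloid profile: height coordinate. -/
noncomputable def uz (H B : ℝ) (s : ℝ) : ℝ :=
  ∫ t in (3 * π / (2 * H))..(s + 3 * π / (2 * H)),
    (1 + B * Real.sin (H * t)) / Real.sqrt (1 + B ^ 2 + 2 * B * Real.sin (H * t))

/-- The first positive zero of `x''` for the unduloid. -/
noncomputable def us₀ (H B : ℝ) : ℝ := (1 / H) * Real.arcsin (-B) + 3 * π / (2 * H)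

/-- The function `g(s) = x(s) − (x'(s)/z'(s))z(s)` for the unduloid. -/
noncomputable def ug (H B : ℝ) (s : ℝ) : ℝ :=
  ux H B s - (deriv (ux H B) s / deriv (uz H B) s) * uz H B s

lemma sin_add_three_pi_div_two (x : ℝ) : sin (x + 3 * π / 2) = -cos x := by
  rw [show x + 3 * π / 2 = x + π / 2 + π by ring, sin_add_pi, sin_add_pi_div_two]

lemma one_sub_mul_pos {B c : ℝ} (hB : |B| < 1) (hc : |c| ≤ 1) : 0 < 1 - B * c := by
  have : |B * c| < 1 := by
    rw [abs_mul]; nlinarith [abs_nonneg B, abs_nonneg c]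
  linarith [le_abs_self (B * c)]

lemma one_add_sq_sub_two_mul_pos {B c : ℝ} (hB : |B| < 1) (hc : |c| ≤ 1) :
    0 < 1 + B ^ 2 - 2 * B * c := by
  have h := one_sub_mul_pos hB hc
  have hc2 : c ^ 2 ≤ 1 := by nlinarith [sq_abs c, abs_nonneg c]
  nlinarith [sq_nonneg B]

lemma lt_cos_of_abs_lt_arccos {B x : ℝ} (hB₁ : -1 ≤ B) (hB₂ : B ≤ 1) (h : |x| < arccos B) :
    B < cos x := by
  rw [← cos_abs]
  calc B = cos (arccos B) := (cos_arccos hB₁ hB₂).symm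
    _ < cos |x| := strictAntiOn_cos ⟨abs_nonneg x, h.le.trans (arccos_le_pi B)⟩
      ⟨arccos_nonneg B, arccos_le_pi B⟩ h

lemma cos_lt_of_arccos_lt_of_lt {B x : ℝ} (hB₁ : -1 ≤ B) (hB₂ : B ≤ 1) (h₁ : arccos B < x)
    (h₂ : x < 2 * π - arccos B) : cos x < B := by
  have hcos : ∀ y, arccos B < y → y ≤ π → cos y < B := fun y hy hyπ =>
    cos_arccos hB₁ hB₂ ▸ strictAntiOn_cos ⟨arccos_nonneg B, arccos_le_pi B⟩
      ⟨(arccos_nonneg B).trans hy.le, hyπ⟩ hy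
  rcases le_or_gt x π with hx | hx
  · exact hcos x h₁ hx
  · rw [← cos_two_pi_sub]
    exact hcos _ (by linarith) (by linarith)

section Unduloid

variable {H B : ℝ}

lemma ux_eq (H B s : ℝ) : ux H B s = √(1 + B ^ 2 - 2 * B * cos (H * s)) / H := by
  rw [ux, sin_add_three_pi_div_two]; ring_nf

lemma hasDerivAt_ux (hH : H ≠ 0) (hB : |B| < 1) (s : ℝ) :
    HasDerivAt (ux H B) (B * sin (H * s) / √(1 + B ^ 2 - 2 * B * cos (H * s))) s := by
  have hQ := one_add_sq_sub_two_mul_pos hB (abs_cos_le_one (H * s))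
  have h := ((((hasDerivAt_id' s).const_mul H).cos.const_mul (2 * B)).const_sub
    (1 + B ^ 2)).sqrt hQ.ne' |>.div_const H
  rw [funext (ux_eq H B)]
  refine h.congr_deriv ?_
  field_simp

lemma continuous_uz_integrand (hB : |B| < 1) :
    Continuous fun t => (1 + B * sin (H * t)) / √(1 + B ^ 2 + 2 * B * sin (H * t)) := by
  refine Continuous.div (by fun_prop) (by fun_prop) fun t => (Real.sqrt_pos.2 ?_).ne'
  have := one_add_sq_sub_two_mul_pos hB ((abs_neg (sin (H * t))).trans_le (abs_sin_le_one _))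
  linarith

lemma hasDerivAt_uz (hH : H ≠ 0) (hB : |B| < 1) (s : ℝ) :
    HasDerivAt (uz H B) ((1 - B * cos (H * s)) / √(1 + B ^ 2 - 2 * B * cos (H * s))) s := by
  have hf := continuous_uz_integrand (H := H) hB
  have h := (intervalIntegral.integral_hasDerivAt_right (a := 3 * π / (2 * H))
    (hf.intervalIntegrable _ _) hf.aestronglyMeasurable.stronglyMeasurableAtFilter
    hf.continuousAt).comp s ((hasDerivAt_id' s).add_const (3 * π / (2 * H)))
  refine h.congr_deriv ?_
  have : H * (s + 3 * π / (2 * H)) = H * s + 3 * π / 2 := by field_simp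
  simp only [this, sin_add_three_pi_div_two, mul_one]
  ring_nf

lemma uz_zero (H B : ℝ) : uz H B 0 = 0 := by simp [uz]

lemma strictMono_uz (hH : H ≠ 0) (hB : |B| < 1) : StrictMono (uz H B) :=
  strictMono_of_hasDerivAt_pos (hasDerivAt_uz hH hB) fun _ =>
    div_pos (one_sub_mul_pos hB (abs_cos_le_one _))
      (Real.sqrt_pos.2 (one_add_sq_sub_two_mul_pos hB (abs_cos_le_one _)))

lemma uz_pos (hH : H ≠ 0) (hB : |B| < 1) {s : ℝ} (hs : 0 < s) : 0 < uz H B s :=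
  uz_zero H B ▸ strictMono_uz hH hB hs

lemma ug_eq (hH : H ≠ 0) (hB : |B| < 1) (s : ℝ) :
    ug H B s = ux H B s - B * sin (H * s) / (1 - B * cos (H * s)) * uz H B s := by
  have hQ := (Real.sqrt_pos.2 (one_add_sq_sub_two_mul_pos hB (abs_cos_le_one (H * s)))).ne'
  rw [ug, (hasDerivAt_ux hH hB s).deriv, (hasDerivAt_uz hH hB s).deriv,
    div_div_div_cancel_right₀ hQ]

lemma hasDerivAt_ug (hH : H ≠ 0) (hB : |B| < 1) (s : ℝ) :
    HasDerivAt (ug H B)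
      (B * H * (B - cos (H * s)) * uz H B s / (1 - B * cos (H * s)) ^ 2) s := by
  have hQ := (Real.sqrt_pos.2 (one_add_sq_sub_two_mul_pos hB (abs_cos_le_one (H * s)))).ne'
  have hD := one_sub_mul_pos hB (abs_cos_le_one (H * s))
  have hr := (((hasDerivAt_id' s).const_mul H).sin.const_mul B).div
    ((((hasDerivAt_id' s).const_mul H).cos.const_mul B).const_sub 1) hD.ne'
  have h := (hasDerivAt_ux hH hB s).sub (hr.mul (hasDerivAt_uz hH hB s))
  rw [funext (ug_eq hH hB)]
  refine h.congr_deriv ?_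
  simp only [Pi.div_apply]
  field_simp
  linear_combination (B ^ 2 * H) * uz H B s * (sin_sq_add_cos_sq (H * s))

lemma mul_us₀ (hH : H ≠ 0) (B : ℝ) : H * us₀ H B = π + arccos B := by
  rw [us₀, arcsin_neg, arccos_eq_pi_div_two_sub_arcsin]
  field_simp
  ring

lemma arccos_div_lt_us₀ (hH : 0 < H) (B : ℝ) : arccos B / H < us₀ H B := by
  rw [div_lt_iff₀' hH, mul_us₀ hH.ne']
  linarith [pi_pos]

lemma isMinOn_ug (hH : 0 < H) (hB₀ : 0 < B) (hB₁ : B < 1) :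
    IsMinOn (ug H B) (Ioo 0 (us₀ H B)) (arccos B / H) := by
  have hB : |B| < 1 := abs_lt.2 ⟨by linarith, hB₁⟩
  have hd : Differentiable ℝ (ug H B) := fun s => (hasDerivAt_ug hH.ne' hB s).differentiableAt
  refine isMinOn_Ioo_of_deriv hd.continuous.continuousAt hd.differentiableOn hd.differentiableOn
    (fun s ⟨hs₀, hs₁⟩ => ?_) (fun s ⟨hs₁, hs₂⟩ => ?_) <;>
    rw [(hasDerivAt_ug hH.ne' hB s).deriv]
  · have hBc : B < cos (H * s) := lt_cos_of_abs_lt_arccos (by linarith) hB₁.le <| by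
      rwa [abs_of_pos (mul_pos hH hs₀), ← lt_div_iff₀' hH]
    refine div_nonpos_of_nonpos_of_nonneg (mul_neg_of_neg_of_pos ?_ (uz_pos hH.ne' hB hs₀)).le
      (sq_nonneg _)
    exact mul_neg_of_pos_of_neg (mul_pos hB₀ hH) (sub_neg.2 hBc)
  · have hcB : cos (H * s) < B := by
      refine cos_lt_of_arccos_lt_of_lt (by linarith) hB₁.le (by rwa [← div_lt_iff₀' hH]) ?_
      have := mul_lt_mul_of_pos_left hs₂ hH
      rw [mul_us₀ hH.ne'] at this
      linarith [arccos_le_pi_div_two.2 hB₀.le]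
    have hs : 0 < s := (div_nonneg (arccos_nonneg B) hH.le).trans_lt hs₁
    exact div_nonneg (mul_pos (mul_pos (mul_pos hB₀ hH) (sub_pos.2 hcB)) (uz_pos hH.ne' hB hs)).le
      (sq_nonneg _)

lemma ug_arccos_div_pos (hH : 0 < H) (hB₀ : 0 < B) (hB₁ : B < 1)
    (hz : uz H B (arccos B / H) < (1 - B ^ 2) / (H * B)) : 0 < ug H B (arccos B / H) := by
  have hB : |B| < 1 := abs_lt.2 ⟨by linarith, hB₁⟩
  have hB2 : 0 < 1 - B ^ 2 := by nlinarith
  have hHz : H * B * uz H B (arccos B / H) < 1 - B ^ 2 := by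
    rwa [lt_div_iff₀ (by positivity), mul_comm] at hz
  rw [ug_eq hH.ne' hB, ux_eq, mul_div_cancel₀ _ hH.ne', cos_arccos (by linarith) hB₁.le,
    sin_arccos, show 1 + B ^ 2 - 2 * B * B = 1 - B ^ 2 by ring, show 1 - B * B = 1 - B ^ 2 by ring]
  have hu : 0 < √(1 - B ^ 2) := Real.sqrt_pos.2 hB2
  rw [sub_pos, div_mul_eq_mul_div, div_lt_div_iff₀ hB2 hH]
  nlinarith [mul_lt_mul_of_pos_left hHz hu]

end Unduloid

/-- If the unduloid (`H > 0`, `0 < B < 1`) satisfies `z(s₀) < z₀ = (1−B²)/(HB)`, then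
`g(s) > 0` for all `s ∈ (0, s₀)`. -/
theorem stmt11 (H B : ℝ) (hH : 0 < H) (hB0 : 0 < B) (hB1 : B < 1)
    (hzs₀ : uz H B (us₀ H B) < (1 - B ^ 2) / (H * B)) :
    ∀ s ∈ Ioo 0 (us₀ H B), 0 < ug H B s := by
  intro s hs
  have hz : uz H B (arccos B / H) < (1 - B ^ 2) / (H * B) :=
    (strictMono_uz hH.ne' (abs_lt.2 ⟨by linarith, hB1⟩) (arccos_div_lt_us₀ hH B)).trans hzs₀
  exact (ug_arccos_div_pos hH hB0 hB1 hz).trans_le (isMinOn_ug hH hB0 hB1 hs)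
end
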